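/- arXiv:1801.03785 — 2 statements merged into one kernel-verified Lean document; each statement's English description precedes it below -/
import Mathlib

section
/- Let H be a separable Hilbert space with orthonormal basis (e_k). A sequence (f_k) in H is a frame for H if and only if there exists a bounded surjective linear operator U : H → H with f_k = U(e_k) for all k. -/
local notation "⟪" x ", " y "⟫" => @inner ℂ _ _ x y
local notation "ℓ²" => lp (fun _ : ℕ => ℂ) 2

def IsFrame {H : Type*} [NormedAddCommGroup H] [InnerProductSpace ℂ H] (f : ℕ → H) : Prop :=
  ∃ A B : ℝ, 0 < A ∧ 0 < B ∧ ∀ x : H,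
    Summable (fun i => ‖⟪x, f i⟫‖ ^ 2) ∧
    A * ‖x‖ ^ 2 ≤ ∑' i, ‖⟪x, f i⟫‖ ^ 2 ∧
    ∑' i, ‖⟪x, f i⟫‖ ^ 2 ≤ B * ‖x‖ ^ 2


/-!
Write `f k = U (e k)`. By Parseval, `∑ k, ‖⟪x, f k⟫‖ ^ 2 = ‖U† x‖ ^ 2`, so the frame
inequalities say exactly that `U†` is bounded below (the upper bound is automatic). For an
operator between Hilbert spaces this is equivalent to surjectivity of `U`: one way by the open
mapping theorem, the other because `U U†` is then coercive, hence invertible. Conversely, given a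
frame, the upper bound makes the analysis operator `x ↦ (⟪f k, x⟫)ₖ` a bounded map into `ℓ²`,
and `U` is its adjoint composed with the coordinate isometry of `e`.
-/

open ContinuousLinearMap
open scoped InnerProductSpace InnerProduct

section

variable {𝕜 E F ι : Type*} [RCLike 𝕜] [NormedAddCommGroup E] [InnerProductSpace 𝕜 E]
  [NormedAddCommGroup F] [InnerProductSpace 𝕜 F]

theorem HilbertBasis.hasSum_norm_inner_sq (b : HilbertBasis ι 𝕜 E) (x : E) :
    HasSum (fun i => ‖⟪b i, x⟫_𝕜‖ ^ 2) (‖x‖ ^ 2) := by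
  simpa [b.repr_apply_apply] using lp.hasSum_norm (p := 2) (by norm_num) (b.repr x)

theorem HilbertBasis.hasSum_norm_inner_sq_of_apply_eq [CompleteSpace E] [CompleteSpace F]
    (b : HilbertBasis ι 𝕜 E) {U : E →L[𝕜] F} {f : ι → F} (hf : ∀ i, f i = U (b i)) (y : F) :
    HasSum (fun i => ‖⟪y, f i⟫_𝕜‖ ^ 2) (‖(U†) y‖ ^ 2) := by
  simpa [hf, ← adjoint_inner_left U, norm_inner_symm ((U†) y)] using
    b.hasSum_norm_inner_sq ((U†) y)

namespace ContinuousLinearMap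

variable [CompleteSpace E] [CompleteSpace F]

theorem exists_mul_sq_le_norm_adjoint_sq_of_surjective {U : E →L[𝕜] F}
    (hU : Function.Surjective U) : ∃ A > 0, ∀ y, A * ‖y‖ ^ 2 ≤ ‖(U†) y‖ ^ 2 := by
  obtain ⟨C, hC, hpre⟩ := U.exists_preimage_norm_le hU
  have hle : ∀ y, ‖y‖ ≤ C * ‖(U†) y‖ := by
    intro y
    obtain ⟨z, rfl, hz⟩ := hpre y
    rcases eq_or_ne (U z) 0 with h0 | h0
    · simp [h0]
    have hpos : 0 < ‖U z‖ := norm_pos_iff.mpr h0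
    refine le_of_mul_le_mul_right ?_ hpos
    calc ‖U z‖ * ‖U z‖
        = ‖⟪U z, U z⟫_𝕜‖ := by
          rw [inner_self_eq_norm_sq_to_K, norm_pow, RCLike.norm_ofReal, abs_norm, sq]
      _ = ‖⟪(U†) (U z), z⟫_𝕜‖ := by rw [adjoint_inner_left]
      _ ≤ ‖(U†) (U z)‖ * ‖z‖ := norm_inner_le_norm _ _
      _ ≤ ‖(U†) (U z)‖ * (C * ‖U z‖) := by gcongr
      _ = C * ‖(U†) (U z)‖ * ‖U z‖ := by ring
  refine ⟨(C ^ 2)⁻¹, by positivity, fun y => ?_⟩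
  rw [inv_mul_le_iff₀ (by positivity), ← mul_pow]
  exact pow_le_pow_left₀ (norm_nonneg y) (hle y) 2

theorem surjective_of_mul_sq_le_norm_adjoint_sq {U : E →L[𝕜] F} {A : ℝ} (hA : 0 < A)
    (hU : ∀ y, A * ‖y‖ ^ 2 ≤ ‖(U†) y‖ ^ 2) : Function.Surjective U := by
  have hUU : IsUnit (U ∘L U†) :=
    isUnit_of_forall_le_norm_inner_map _ (c := ⟨A, hA.le⟩) hA fun y => by
      change ‖y‖ ^ 2 * A ≤ _
      simpa [← adjoint_inner_right U, inner_self_eq_norm_sq_to_K, mul_comm] using hU y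
  intro y
  obtain ⟨x, hx⟩ := (isUnit_iff_bijective.mp hUU).2 y
  exact ⟨(U†) x, hx⟩

end ContinuousLinearMap

section Bessel

variable {f : ι → F} {B : ℝ}

theorem exists_analysisOperator_of_bessel (hsum : ∀ x, Summable fun i => ‖⟪x, f i⟫_𝕜‖ ^ 2)
    (hB : ∀ x, ∑' i, ‖⟪x, f i⟫_𝕜‖ ^ 2 ≤ B * ‖x‖ ^ 2) :
    ∃ T : F →L[𝕜] lp (fun _ : ι => 𝕜) 2, ∀ x i, T x i = ⟪f i, x⟫_𝕜 := by
  have hmem : ∀ x, Memℓp (fun i => ⟪f i, x⟫_𝕜) 2 := fun x => by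
    rw [memℓp_gen_iff (by norm_num)]
    simpa [norm_inner_symm] using hsum x
  let T : F →ₗ[𝕜] lp (fun _ : ι => 𝕜) 2 :=
    { toFun := fun x => ⟨_, hmem x⟩
      map_add' := fun x y => by ext i; exact inner_add_right _ _ _
      map_smul' := fun c x => by ext i; exact inner_smul_right _ _ _ }
  have hnorm : ∀ x, ‖T x‖ ^ 2 = ∑' i, ‖⟪x, f i⟫_𝕜‖ ^ 2 := fun x => by
    simpa [T, norm_inner_symm] using (lp.hasSum_norm (p := 2) (by norm_num) (T x)).tsum_eq.symm
  refine ⟨T.mkContinuous √B fun x => ?_, fun _ _ => rfl⟩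
  rw [← Real.sqrt_sq (norm_nonneg (T x)), ← Real.sqrt_sq (norm_nonneg x),
    ← Real.sqrt_mul' _ (sq_nonneg _)]
  exact Real.sqrt_le_sqrt (hnorm x ▸ hB x)

theorem HilbertBasis.exists_apply_eq_of_bessel [CompleteSpace E] [CompleteSpace F]
    (b : HilbertBasis ι 𝕜 E) (hsum : ∀ x, Summable fun i => ‖⟪x, f i⟫_𝕜‖ ^ 2)
    (hB : ∀ x, ∑' i, ‖⟪x, f i⟫_𝕜‖ ^ 2 ≤ B * ‖x‖ ^ 2) :
    ∃ U : E →L[𝕜] F, ∀ i, f i = U (b i) := by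
  classical
  obtain ⟨T, hT⟩ := exists_analysisOperator_of_bessel hsum hB
  refine ⟨(T†) ∘L (b.repr.toContinuousLinearEquiv : E →L[𝕜] lp (fun _ : ι => 𝕜) 2),
    fun i => ext_inner_right 𝕜 fun z => ?_⟩
  simp [adjoint_inner_left, b.repr_self, lp.inner_single_left, hT]

end Bessel

end

theorem stmt1_general {H : Type*} [NormedAddCommGroup H] [InnerProductSpace ℂ H] [CompleteSpace H]
    (e : HilbertBasis ℕ ℂ H) (f : ℕ → H) :
    IsFrame f ↔
      ∃ U : H →L[ℂ] H, Function.Surjective U ∧ ∀ k, f k = U (e k) := by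
  constructor
  · rintro ⟨A, B, hA, -, hframe⟩
    obtain ⟨U, hU⟩ :=
      e.exists_apply_eq_of_bessel (fun x => (hframe x).1) (fun x => (hframe x).2.2)
    refine ⟨U, surjective_of_mul_sq_le_norm_adjoint_sq hA fun x => ?_, hU⟩
    rw [← (e.hasSum_norm_inner_sq_of_apply_eq hU x).tsum_eq]
    exact (hframe x).2.1
  · rintro ⟨U, hU, hf⟩
    obtain ⟨A, hA, hlower⟩ := exists_mul_sq_le_norm_adjoint_sq_of_surjective hU
    refine ⟨A, ‖U†‖ ^ 2 + 1, hA, by positivity, fun x => ?_⟩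
    have hparseval := e.hasSum_norm_inner_sq_of_apply_eq hf x
    rw [hparseval.tsum_eq]
    refine ⟨hparseval.summable, hlower x, ?_⟩
    calc ‖(U†) x‖ ^ 2 ≤ (‖U†‖ * ‖x‖) ^ 2 := by gcongr; exact (U†).le_opNorm x
      _ ≤ (‖U†‖ ^ 2 + 1) * ‖x‖ ^ 2 := by rw [mul_pow]; gcongr; linarith

/-- A sequence is a frame iff it is the image of an orthonormal basis under a
bounded surjective operator. -/
theorem stmt1 {H : Type*} [NormedAddCommGroup H] [InnerProductSpace ℂ H] [CompleteSpace H]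
    [TopologicalSpace.SeparableSpace H] (e : HilbertBasis ℕ ℂ H) (f : ℕ → H) :
    IsFrame f ↔
      ∃ U : H →L[ℂ] H, Function.Surjective U ∧ ∀ k, f k = U (e k) :=
  stmt1_general e f
end

section
/- Let (f_k) be a frame for H and let U = {u_{l k}} be a bounded linear operator on ℓ². Define φ_l = Σ_k u_{l k} f_k. Then (φ_l) is a frame for H if and only if there exists C > 0 such that Σ_l |⟨φ_l, f⟩|² ≥ C Σ_k |⟨f_k, f⟩|² for all f ∈ H. -/
local notation "⟪" x ", " y "⟫" => @inner ℂ _ _ x y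
local notation "ℓ²" => lp (fun _ : ℕ => ℂ) 2

/-!
Writing `c x = (⟪x, f k⟫)_k ∈ ℓ²` for the frame coefficients of `x`, the coefficients of `x`
against `φ` are `(⟪x, φ l⟫)_l = U (c x)`. Hence `∑ |⟪φ l, x⟫|² ≤ ‖U‖² ∑ |⟪f k, x⟫|²`, so `(φ l)` always
has an upper frame bound, and since `∑ |⟪f k, x⟫|²` is comparable to `‖x‖²`, a lower frame bound for
`(φ l)` is the same as a lower bound of its coefficient sums by those of `(f k)`.
-/

section lp

variable {ι : Type*} {E : ι → Type*} [∀ i, NormedAddCommGroup (E i)]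

theorem lp.norm_sq_eq_tsum_norm_sq (a : lp E 2) : ‖a‖ ^ 2 = ∑' i, ‖a i‖ ^ 2 := by
  simpa using lp.norm_rpow_eq_tsum (by norm_num : (0 : ℝ) < (2 : ENNReal).toReal) a

theorem lp.summable_norm_sq (a : lp E 2) : Summable fun i => ‖a i‖ ^ 2 := by
  simpa using (lp.memℓp a).summable (by norm_num : (0 : ℝ) < (2 : ENNReal).toReal)

theorem memℓp_two_of_summable_norm_sq {a : ∀ i, E i} (h : Summable fun i => ‖a i‖ ^ 2) :
    Memℓp a 2 :=
  memℓp_gen (by simpa using h)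

end lp

section Frames

variable {H : Type*} [NormedAddCommGroup H] [InnerProductSpace ℂ H]

theorem isFrame_iff_inner_left {f : ℕ → H} : IsFrame f ↔ ∃ A B : ℝ, 0 < A ∧ 0 < B ∧ ∀ x : H,
    Summable (fun i => ‖⟪f i, x⟫‖ ^ 2) ∧ A * ‖x‖ ^ 2 ≤ ∑' i, ‖⟪f i, x⟫‖ ^ 2 ∧
      ∑' i, ‖⟪f i, x⟫‖ ^ 2 ≤ B * ‖x‖ ^ 2 := by
  simp only [IsFrame, norm_inner_symm (f _)]

theorem isFrame_iff_exists_lower_bound_of_le {f g : ℕ → H} (hf : IsFrame f) {K : ℝ} (hK : 0 ≤ K)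
    (hg : ∀ x, Summable fun l => ‖⟪g l, x⟫‖ ^ 2)
    (hgf : ∀ x, ∑' l, ‖⟪g l, x⟫‖ ^ 2 ≤ K * ∑' k, ‖⟪f k, x⟫‖ ^ 2) :
    IsFrame g ↔ ∃ C : ℝ, 0 < C ∧ ∀ x, C * ∑' k, ‖⟪f k, x⟫‖ ^ 2 ≤ ∑' l, ‖⟪g l, x⟫‖ ^ 2 := by
  rw [isFrame_iff_inner_left] at hf ⊢
  obtain ⟨A, B, hA, hB, hfAB⟩ := hf
  constructor
  · rintro ⟨A', B', hA', -, hgAB⟩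
    refine ⟨A' / B, by positivity, fun x => ?_⟩
    calc A' / B * ∑' k, ‖⟪f k, x⟫‖ ^ 2 ≤ A' / B * (B * ‖x‖ ^ 2) := by
          gcongr; exact (hfAB x).2.2
      _ = A' * ‖x‖ ^ 2 := by field_simp
      _ ≤ ∑' l, ‖⟪g l, x⟫‖ ^ 2 := (hgAB x).2.1
  · rintro ⟨C, hC, hCfg⟩
    refine ⟨C * A, (K + 1) * B, by positivity, by positivity, fun x => ⟨hg x, ?_, ?_⟩⟩
    · calc C * A * ‖x‖ ^ 2 = C * (A * ‖x‖ ^ 2) := mul_assoc _ _ _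
        _ ≤ C * ∑' k, ‖⟪f k, x⟫‖ ^ 2 := by gcongr; exact (hfAB x).2.1
        _ ≤ ∑' l, ‖⟪g l, x⟫‖ ^ 2 := hCfg x
    · have hf_nonneg : 0 ≤ ∑' k, ‖⟪f k, x⟫‖ ^ 2 := tsum_nonneg fun _ => by positivity
      calc ∑' l, ‖⟪g l, x⟫‖ ^ 2 ≤ K * ∑' k, ‖⟪f k, x⟫‖ ^ 2 := hgf x
        _ ≤ (K + 1) * ∑' k, ‖⟪f k, x⟫‖ ^ 2 := by gcongr; linarith
        _ ≤ (K + 1) * (B * ‖x‖ ^ 2) := by gcongr; exact (hfAB x).2.2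
        _ = (K + 1) * B * ‖x‖ ^ 2 := (mul_assoc _ _ _).symm

section Synthesis

variable {f φ : ℕ → H} {u : ℕ → ℕ → ℂ} {U : ℓ² →L[ℂ] ℓ²}

theorem inner_eq_apply_of_hasSum
    (hU : ∀ (c : ℓ²) (l : ℕ), HasSum (fun k => u l k * c k) ((U c : ℕ → ℂ) l))
    (hφ : ∀ l, HasSum (fun k => u l k • f k) (φ l)) {x : H} (c : ℓ²)
    (hc : ∀ k, c k = ⟪x, f k⟫) (l : ℕ) : ⟪x, φ l⟫ = (U c : ℕ → ℂ) l := by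
  have hx : HasSum (fun k => u l k * ⟪x, f k⟫) ⟪x, φ l⟫ := by
    simpa [inner_smul_right] using (hφ l).mapL (innerSL ℂ x)
  refine hx.unique ?_
  simpa only [hc] using hU c l

theorem summable_and_tsum_le_of_hasSum
    (hU : ∀ (c : ℓ²) (l : ℕ), HasSum (fun k => u l k * c k) ((U c : ℕ → ℂ) l))
    (hφ : ∀ l, HasSum (fun k => u l k • f k) (φ l)) {x : H}
    (hx : Summable fun k => ‖⟪f k, x⟫‖ ^ 2) :
    Summable (fun l => ‖⟪φ l, x⟫‖ ^ 2) ∧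
      ∑' l, ‖⟪φ l, x⟫‖ ^ 2 ≤ ‖U‖ ^ 2 * ∑' k, ‖⟪f k, x⟫‖ ^ 2 := by
  simp only [norm_inner_symm _ x] at hx ⊢
  let c : ℓ² := ⟨fun k => ⟪x, f k⟫, memℓp_two_of_summable_norm_sq hx⟩
  have hUc : ∀ l, ‖⟪x, φ l⟫‖ = ‖(U c : ℕ → ℂ) l‖ := fun l => by
    rw [inner_eq_apply_of_hasSum hU hφ c (fun _ => rfl) l]
  simp only [hUc]
  refine ⟨lp.summable_norm_sq (U c), ?_⟩
  calc ∑' l, ‖(U c : ℕ → ℂ) l‖ ^ 2 = ‖U c‖ ^ 2 := (lp.norm_sq_eq_tsum_norm_sq _).symm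
    _ ≤ (‖U‖ * ‖c‖) ^ 2 := by gcongr; exact U.le_opNorm c
    _ = ‖U‖ ^ 2 * ∑' k, ‖⟪x, f k⟫‖ ^ 2 := by rw [mul_pow, lp.norm_sq_eq_tsum_norm_sq]

end Synthesis

end Frames

theorem stmt11_general {H : Type*} [NormedAddCommGroup H] [InnerProductSpace ℂ H]
    (f : ℕ → H) (hf : IsFrame f)
    (u : ℕ → ℕ → ℂ) (U : ℓ² →L[ℂ] ℓ²)
    (hU : ∀ (c : ℓ²) (l : ℕ), HasSum (fun k => u l k * c k) ((U c : ℕ → ℂ) l))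
    (φ : ℕ → H) (hφ : ∀ l, HasSum (fun k => u l k • f k) (φ l)) :
    IsFrame φ ↔ ∃ C : ℝ, 0 < C ∧ ∀ x : H,
      C * ∑' k, ‖⟪f k, x⟫‖ ^ 2 ≤ ∑' l, ‖⟪φ l, x⟫‖ ^ 2 := by
  have hf_summable : ∀ x, Summable fun k => ‖⟪f k, x⟫‖ ^ 2 := by
    obtain ⟨A, B, -, -, hfAB⟩ := isFrame_iff_inner_left.mp hf
    exact fun x => (hfAB x).1
  have hφf := fun x => summable_and_tsum_le_of_hasSum hU hφ (hf_summable x)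
  exact isFrame_iff_exists_lower_bound_of_le hf (sq_nonneg ‖U‖)
    (fun x => (hφf x).1) (fun x => (hφf x).2)

/-- Let `(f_k)` be a frame and `{u_{lk}}` a bounded operator on `ℓ²`.  With
`φ_l = ∑_k u_{lk} f_k`, the family `(φ_l)` is a frame iff there is `C > 0` with
`∑_l |⟪φ_l, x⟫|² ≥ C ∑_k |⟪f_k, x⟫|²` for all `x ∈ H`. -/
theorem stmt11 {H : Type*} [NormedAddCommGroup H] [InnerProductSpace ℂ H] [CompleteSpace H]
    [TopologicalSpace.SeparableSpace H] (f : ℕ → H) (hf : IsFrame f)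
    (u : ℕ → ℕ → ℂ) (U : ℓ² →L[ℂ] ℓ²)
    (hU : ∀ (c : ℓ²) (l : ℕ), HasSum (fun k => u l k * c k) ((U c : ℕ → ℂ) l))
    (φ : ℕ → H) (hφ : ∀ l, HasSum (fun k => u l k • f k) (φ l)) :
    IsFrame φ ↔ ∃ C : ℝ, 0 < C ∧ ∀ x : H,
      C * ∑' k, ‖⟪f k, x⟫‖ ^ 2 ≤ ∑' l, ‖⟪φ l, x⟫‖ ^ 2 :=
  stmt11_general f hf u U hU φ hφ
end
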